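/- Define V_ρ^t(f)(x) = t·f(x) + (1−t)(x−c₁)T_ρ(f)(x). Then for s,t > 0 the composition formula V_ρ^{t·s} = V_{ρ_t}^s ∘ V_ρ^t holds on the hyperplane H_ρ (equivalently, on the span of the orthonormal polynomials P_n, n ≥ 1). -/

import Mathlib

/-!
For `r > b` the secondary operator splits as `T_w f (r) = f(r) S_w(r) - Φ_w f (r)`, where `S_w` is
the Stieltjes transform and `Φ_w f (r) = ∫ f(u) w(u) / (r - u) du` tends to `0` as `r → ∞`.
On polynomials `T_w` takes polynomial values. Feeding the equi-normal relation
`S_{ρ_t} (t + (1 - t)(r - c₁) S_ρ) = S_ρ` into the splitting shows that the polynomial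
`T_{ρ_t}(V_ρ^t p) - T_ρ p` equals `Φ_ρ p · (1 - (1 - t)(r - c₁) S_{ρ_t}) - Φ_{ρ_t}(V_ρ^t p)`
for `r > b`, hence tends to `0` at infinity and vanishes. With `T_{ρ_t} ∘ V_ρ^t = T_ρ` the
composition formula is a line of algebra.
-/

open MeasureTheory Set Filter Polynomial Topology

noncomputable section

/- `secondaryOp a b w` is the secondary operator `T_w`, `deformOp a b c t w` is `V_w^t` (with `c`
the first moment of `w`), and `stieltjes a b w` is the Stieltjes transform of `w` on the real
axis. -/
def secondaryOp (a b : ℝ) (w f : ℝ → ℝ) (x : ℝ) : ℝ :=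
  ∫ u in Icc a b, (f u - f x) * w u / (u - x)

def deformOp (a b c t : ℝ) (w f : ℝ → ℝ) (x : ℝ) : ℝ :=
  t * f x + (1 - t) * (x - c) * secondaryOp a b w f x

def stieltjes (a b : ℝ) (w : ℝ → ℝ) (r : ℝ) : ℝ :=
  ∫ u in Icc a b, w u / (r - u)

end

theorem Polynomial.eval_sub_eval_eq_sum_mul {R : Type*} [CommRing R] (f : R[X]) (u x : R) :
    f.eval u - f.eval x =
      (∑ n ∈ Finset.range (f.natDegree + 1),
        f.coeff n * ∑ i ∈ Finset.range n, u ^ i * x ^ (n - 1 - i)) * (u - x) := by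
  rw [eval_eq_sum_range (x := u), eval_eq_sum_range (x := x), Finset.sum_mul,
    ← Finset.sum_sub_distrib]
  refine Finset.sum_congr rfl fun n _ => ?_
  linear_combination (-f.coeff n) * geom_sum₂_mul u x n

section

variable {a b : ℝ} {w : ℝ → ℝ}

theorem exists_secondaryOp_eq_eval (hw : IntegrableOn w (Icc a b)) (f : ℝ[X]) :
    ∃ q : ℝ[X], ∀ x, secondaryOp a b w f.eval x = q.eval x := by
  set m : ℕ → ℝ := fun i => ∫ u in Icc a b, u ^ i * w u
  refine ⟨∑ n ∈ Finset.range (f.natDegree + 1), ∑ i ∈ Finset.range n,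
    C (f.coeff n * m i) * X ^ (n - 1 - i), fun x => ?_⟩
  have hne : ∀ᵐ u ∂volume.restrict (Icc a b), u ≠ x :=
    ae_restrict_of_ae (volume.ae_ne x)
  have hint : ∀ n i, IntegrableOn (fun u => f.coeff n * x ^ (n - 1 - i) * (u ^ i * w u))
      (Icc a b) := fun n i =>
    (hw.continuousOn_mul (continuous_pow i).continuousOn isCompact_Icc).const_mul _
  calc secondaryOp a b w f.eval x
      = ∫ u in Icc a b, ∑ n ∈ Finset.range (f.natDegree + 1), ∑ i ∈ Finset.range n,
          f.coeff n * x ^ (n - 1 - i) * (u ^ i * w u) := by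
        refine integral_congr_ae ?_
        filter_upwards [hne] with u hu
        rw [f.eval_sub_eval_eq_sum_mul u x, mul_right_comm, mul_div_cancel_right₀ _
          (sub_ne_zero.2 hu), Finset.sum_mul]
        refine Finset.sum_congr rfl fun n _ => ?_
        rw [mul_assoc, Finset.sum_mul, Finset.mul_sum]
        exact Finset.sum_congr rfl fun i _ => by ring
    _ = _ := by
        rw [integral_finsetSum _ fun n _ => integrable_finsetSum _ fun i _ => hint n i]
        simp only [eval_finsetSum, eval_mul, eval_C, eval_pow, eval_X]
        refine Finset.sum_congr rfl fun n _ => ?_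
        rw [integral_finsetSum _ fun i _ => hint n i]
        refine Finset.sum_congr rfl fun i _ => ?_
        rw [integral_const_mul]
        ring

theorem integrableOn_mul_div_sub (hw : IntegrableOn w (Icc a b)) {f : ℝ → ℝ}
    (hf : ContinuousOn f (Icc a b)) {r : ℝ} (hr : b < r) :
    IntegrableOn (fun u => f u * w u / (r - u)) (Icc a b) := by
  have hden : ∀ u ∈ Icc a b, r - u ≠ 0 := fun u hu => by linarith [hu.2]
  refine (hw.continuousOn_mul (hf.div (continuousOn_const.sub continuousOn_id) hden)
    isCompact_Icc).congr_fun (fun u _ => ?_) measurableSet_Icc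
  simp only [Pi.div_apply, Pi.sub_apply, id]
  ring

theorem secondaryOp_eq_of_lt (hw : IntegrableOn w (Icc a b)) {f : ℝ → ℝ}
    (hf : ContinuousOn f (Icc a b)) {r : ℝ} (hr : b < r) :
    secondaryOp a b w f r = f r * stieltjes a b w r - ∫ u in Icc a b, f u * w u / (r - u) := by
  have hS := integrableOn_mul_div_sub hw continuousOn_const hr (f := fun _ => 1)
  simp only [one_mul] at hS
  rw [stieltjes, ← integral_const_mul, ← integral_sub (hS.const_mul _)
    (integrableOn_mul_div_sub hw hf hr)]
  refine setIntegral_congr_fun measurableSet_Icc fun u hu => ?_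
  have : r - u ≠ 0 := by linarith [hu.2]
  have : u - r ≠ 0 := by linarith [hu.2]
  field_simp
  ring

theorem tendsto_integral_div_sub_atTop {v : ℝ → ℝ} (hv : IntegrableOn v (Icc a b)) :
    Tendsto (fun r => ∫ u in Icc a b, v u / (r - u)) atTop (𝓝 0) := by
  have hmeas : ∀ r : ℝ, AEStronglyMeasurable (fun u => v u / (r - u))
      (volume.restrict (Icc a b)) := fun r => by
    have hinv : Measurable fun u : ℝ => (r - u)⁻¹ := by fun_prop
    exact (hv.aestronglyMeasurable.mul hinv.aestronglyMeasurable).congr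
      (ae_of_all _ fun u => (div_eq_mul_inv _ _).symm)
  have hbound : ∀ᶠ r in atTop, ∀ᵐ u ∂volume.restrict (Icc a b), ‖v u / (r - u)‖ ≤ |v u| := by
    filter_upwards [eventually_ge_atTop (b + 1)] with r hr
    filter_upwards [ae_restrict_mem measurableSet_Icc] with u hu
    rw [Real.norm_eq_abs, abs_div]
    exact div_le_self (abs_nonneg _) (by rw [abs_of_pos] <;> linarith [hu.2])
  have hlim : ∀ u, Tendsto (fun r => v u / (r - u)) atTop (𝓝 0) := fun u =>
    tendsto_const_nhds.div_atTop (tendsto_atTop_add_const_right _ _ tendsto_id)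
  simpa using tendsto_integral_filter_of_dominated_convergence (fun u => |v u|)
    (Eventually.of_forall hmeas) hbound hv.abs (Eventually.of_forall hlim)

theorem tendsto_sub_mul_stieltjes (hw : IntegrableOn w (Icc a b))
    (hw1 : ∫ u in Icc a b, w u = 1) (c : ℝ) :
    Tendsto (fun r => (r - c) * stieltjes a b w r) atTop (𝓝 1) := by
  have hlim := (tendsto_integral_div_sub_atTop (v := fun u => (u - c) * w u)
    (hw.continuousOn_mul (continuous_id.sub continuous_const).continuousOn
      isCompact_Icc)).const_add 1
  rw [add_zero] at hlim
  refine hlim.congr' ?_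
  filter_upwards [eventually_gt_atTop b] with r hr
  rw [← hw1, ← integral_add hw (integrableOn_mul_div_sub hw (f := fun u => u - c)
    (by fun_prop) hr), stieltjes, ← integral_const_mul]
  refine setIntegral_congr_fun measurableSet_Icc fun u hu => ?_
  have : r - u ≠ 0 := by linarith [hu.2]
  field_simp
  ring

end

theorem ofReal_stieltjes (a b : ℝ) (w : ℝ → ℝ) (r : ℝ) :
    (stieltjes a b w r : ℂ) = ∫ u in Icc a b, (w u : ℂ) / ((r : ℂ) - (u : ℂ)) := by
  rw [stieltjes, ← integral_complex_ofReal]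
  push_cast
  rfl

section

variable {a b c t : ℝ} {ρ ρt : ℝ → ℝ}

theorem deformOp_mul {s : ℝ} {f : ℝ → ℝ} {x : ℝ}
    (hT : secondaryOp a b ρt (deformOp a b c t ρ f) x = secondaryOp a b ρ f x) :
    deformOp a b c (t * s) ρ f x = deformOp a b c s ρt (deformOp a b c t ρ f) x := by
  change _ = s * deformOp a b c t ρ f x +
    (1 - s) * (x - c) * secondaryOp a b ρt (deformOp a b c t ρ f) x
  rw [hT, deformOp, deformOp]
  ring

theorem secondaryOp_deformOp_eval (hρ : IntegrableOn ρ (Icc a b))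
    (hρt : IntegrableOn ρt (Icc a b)) (hρt1 : ∫ u in Icc a b, ρt u = 1)
    (hrel : ∀ r, b < r →
      stieltjes a b ρt r * (t + (1 - t) * (r - c) * stieltjes a b ρ r) = stieltjes a b ρ r)
    (p : ℝ[X]) (x : ℝ) :
    secondaryOp a b ρt (deformOp a b c t ρ p.eval) x = secondaryOp a b ρ p.eval x := by
  obtain ⟨Q, hQ⟩ := exists_secondaryOp_eq_eval hρ p
  set G := C t * p + C (1 - t) * (X - C c) * Q
  have hG : ∀ y, G.eval y = deformOp a b c t ρ p.eval y := fun y => by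
    simp [G, deformOp, hQ]
  obtain ⟨Q', hQ'⟩ := exists_secondaryOp_eq_eval hρt G
  suffices Q' = Q by rw [← funext hG, hQ', hQ, this]
  have hlim : Tendsto (fun r => (∫ u in Icc a b, p.eval u * ρ u / (r - u)) *
      (1 - (1 - t) * ((r - c) * stieltjes a b ρt r)) -
        ∫ u in Icc a b, G.eval u * ρt u / (r - u)) atTop (𝓝 0) := by
    simpa using ((tendsto_integral_div_sub_atTop
      (hρ.continuousOn_mul p.continuous.continuousOn isCompact_Icc)).mul
        (tendsto_const_nhds.sub (tendsto_const_nhds.mul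
          (tendsto_sub_mul_stieltjes hρt hρt1 c)))).sub
      (tendsto_integral_div_sub_atTop
        (hρt.continuousOn_mul G.continuous.continuousOn isCompact_Icc))
  have hdiff : Tendsto (fun r => (Q' - Q).eval r) atTop (𝓝 0) := by
    refine hlim.congr' ?_
    filter_upwards [eventually_gt_atTop b] with r hr
    have eQ := (hQ r).symm.trans (secondaryOp_eq_of_lt hρ p.continuous.continuousOn hr)
    have eQ' := (hQ' r).symm.trans (secondaryOp_eq_of_lt hρt G.continuous.continuousOn hr)
    have eG : G.eval r = t * p.eval r + (1 - t) * (r - c) * Q.eval r := by simp [G]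
    rw [eval_sub]
    linear_combination -eQ' - stieltjes a b ρt r * eG
      - ((1 - t) * (r - c) * stieltjes a b ρt r - 1) * eQ - p.eval r * hrel r hr
  exact sub_eq_zero.1 (leadingCoeff_eq_zero.1 ((tendsto_nhds_iff _).1 hdiff).1)

end

theorem stmt_16_general (a b : ℝ) (ρ ρt : ℝ → ℝ) (t s c₁ : ℝ)
    (hρ1 : ∫ x in Icc a b, ρ x = 1)
    (hρt1 : ∫ x in Icc a b, ρt x = 1)
    -- ρ_t equi-normal with ρ, parameter t
    (hrel : ∀ z ∉ (fun x : ℝ => (x : ℂ)) '' Icc a b,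
      (∫ u in Icc a b, (ρt u : ℂ) / (z - (u : ℂ))) *
          ((t : ℂ) + (1 - (t : ℂ)) * (z - (c₁ : ℂ)) *
            ∫ u in Icc a b, (ρ u : ℂ) / (z - (u : ℂ)))
        = ∫ u in Icc a b, (ρ u : ℂ) / (z - (u : ℂ)))
    (p : Polynomial ℝ)
    (g : ℝ → ℝ)
    -- g = V_ρ^t(p)
    (hg : ∀ x, g x = t * p.eval x + (1 - t) * (x - c₁) *
      ∫ u in Icc a b, (p.eval u - p.eval x) * ρ u / (u - x)) :
    ∀ x ∈ Icc a b,
      t * s * p.eval x + (1 - t * s) * (x - c₁) *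
          (∫ u in Icc a b, (p.eval u - p.eval x) * ρ u / (u - x))
        = s * g x + (1 - s) * (x - c₁) *
            ∫ u in Icc a b, (g u - g x) * ρt u / (u - x) := by
  intro x _
  have hρ : IntegrableOn ρ (Icc a b) := .of_integral_ne_zero (by simp [hρ1])
  have hρt : IntegrableOn ρt (Icc a b) := .of_integral_ne_zero (by simp [hρt1])
  have hrelR : ∀ r, b < r →
      stieltjes a b ρt r * (t + (1 - t) * (r - c₁) * stieltjes a b ρ r) = stieltjes a b ρ r := by
    intro r hr
    have hr' : (r : ℂ) ∉ (fun x : ℝ => (x : ℂ)) '' Icc a b := by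
      rintro ⟨y, hy, hyr⟩
      exact absurd hy.2 (by rw [Complex.ofReal_inj.1 hyr]; exact not_le.2 hr)
    exact_mod_cast (ofReal_stieltjes a b ρt r ▸ ofReal_stieltjes a b ρ r ▸ hrel r hr')
  rw [show g = deformOp a b c₁ t ρ p.eval from funext hg]
  exact deformOp_mul (secondaryOp_deformOp_eval hρ hρt hρt1 hrelR p x)

/-- The composition formula `V_ρ^{t·s} = V_{ρ_t}^s ∘ V_ρ^t` holds
on the hyperplane `H_ρ` (on the span of the orthonormal polynomials `P_n`,
`n ≥ 1`, i.e. on mean-zero polynomials). -/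
theorem stmt_16 (a b : ℝ) (hab : a < b) (ρ ρt : ℝ → ℝ) (t s c₁ : ℝ)
    (ht : 0 < t) (hs : 0 < s)
    (hρ : ∀ x ∈ Icc a b, 0 ≤ ρ x) (hρ1 : ∫ x in Icc a b, ρ x = 1)
    (hρt : ∀ x ∈ Icc a b, 0 ≤ ρt x) (hρt1 : ∫ x in Icc a b, ρt x = 1)
    (hc₁ : c₁ = ∫ x in Icc a b, x * ρ x)
    (hc₁t : c₁ = ∫ x in Icc a b, x * ρt x)
    -- ρ_t equi-normal with ρ, parameter t
    (hrel : ∀ z ∉ (fun x : ℝ => (x : ℂ)) '' Icc a b,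
      (∫ u in Icc a b, (ρt u : ℂ) / (z - (u : ℂ))) *
          ((t : ℂ) + (1 - (t : ℂ)) * (z - (c₁ : ℂ)) *
            ∫ u in Icc a b, (ρ u : ℂ) / (z - (u : ℂ)))
        = ∫ u in Icc a b, (ρ u : ℂ) / (z - (u : ℂ)))
    (p : Polynomial ℝ)
    (hp0 : ∫ x in Icc a b, p.eval x * ρ x = 0)
    (g : ℝ → ℝ)
    -- g = V_ρ^t(p)
    (hg : ∀ x, g x = t * p.eval x + (1 - t) * (x - c₁) *
      ∫ u in Icc a b, (p.eval u - p.eval x) * ρ u / (u - x)) :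
    ∀ x ∈ Icc a b,
      t * s * p.eval x + (1 - t * s) * (x - c₁) *
          (∫ u in Icc a b, (p.eval u - p.eval x) * ρ u / (u - x))
        = s * g x + (1 - s) * (x - c₁) *
            ∫ u in Icc a b, (g u - g x) * ρt u / (u - x) :=
  stmt_16_general a b ρ ρt t s c₁ hρ1 hρt1 hrel p g hg
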